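/- arXiv:1703.04248 — 4 statements merged into one kernel-verified Lean document; each statement's English description precedes it below -/
import Mathlib

section
/- For every prime p, the central binomial coefficient satisfies the identity in ℚ: C(2p, p) = 2 · Σ_{n=0}^{p−1} p^n · H_{p−1}(1^n). -/
/-- Multiple harmonic sum `H_N(s₁,…,s_k)`. -/
def mhs : ℕ → List ℕ → ℚ
  | _, [] => 1
  | N, s :: t => ∑ n ∈ Finset.Icc 1 N, (1 / (n : ℚ) ^ s) * mhs (n - 1) t

/-!
The multiple harmonic sums `H_N(1^n)` are the elementary symmetric functions of `1, 1/2, …, 1/N`,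
so `∑ₙ xⁿ H_N(1^n) = ∏_{k=1}^N (1 + x/k)`. At `x = p`, `N = p - 1` this product is
`C(2p-1, p-1) = C(2p, p) / 2`.
-/

open Finset

theorem mhs_succ_cons (N s : ℕ) (t : List ℕ) :
    mhs (N + 1) (s :: t) = mhs N (s :: t) + mhs N t / ((N : ℚ) + 1) ^ s := by
  rw [mhs, mhs, sum_Icc_succ_top (by omega)]
  push_cast
  simp [div_eq_inv_mul]

theorem mhs_eq_zero_of_lt_length {N : ℕ} {t : List ℕ} (h : N < t.length) : mhs N t = 0 := by
  induction N generalizing t with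
  | zero =>
    obtain ⟨s, t, rfl⟩ := List.exists_cons_of_length_pos h
    simp [mhs]
  | succ N ih =>
    obtain ⟨s, t, rfl⟩ := List.exists_cons_of_length_pos (by omega : 0 < t.length)
    simp only [List.length_cons] at h
    rw [mhs_succ_cons, ih (by simp; omega), ih (by omega), zero_div, add_zero]

theorem sum_pow_mul_mhs_replicate_one (x : ℚ) {N M : ℕ} (h : N < M) :
    ∑ n ∈ range M, x ^ n * mhs N (List.replicate n 1) = ∏ k ∈ Icc 1 N, (1 + x / k) := by
  induction N generalizing M with
  | zero =>
    rw [sum_eq_single 0]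
    · simp [mhs]
    · intro n _ hn
      rw [mhs_eq_zero_of_lt_length (by simpa [Nat.pos_iff_ne_zero]), mul_zero]
    · simp [h]
  | succ N ih =>
    obtain ⟨K, rfl⟩ : ∃ K, M = K + 1 := ⟨M - 1, by omega⟩
    have hstep (n : ℕ) : x ^ (n + 1) * mhs (N + 1) (List.replicate (n + 1) 1) =
        x ^ (n + 1) * mhs N (List.replicate (n + 1) 1) +
          x / (N + 1) * (x ^ n * mhs N (List.replicate n 1)) := by
      rw [List.replicate_succ, mhs_succ_cons]
      ring
    calc ∑ n ∈ range (K + 1), x ^ n * mhs (N + 1) (List.replicate n 1)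
        = ∑ n ∈ range (K + 1), x ^ n * mhs N (List.replicate n 1) +
            x / (N + 1) * ∑ n ∈ range K, x ^ n * mhs N (List.replicate n 1) := by
          rw [sum_range_succ', sum_congr rfl fun n _ => hstep n, sum_add_distrib, ← mul_sum,
            sum_range_succ' _ K]
          simp only [List.replicate_zero, mhs]
          ring
      _ = ∏ k ∈ Icc 1 (N + 1), (1 + x / k) := by
          rw [ih (by omega), ih (by omega), prod_Icc_succ_top (by omega)]
          push_cast
          ring

theorem prod_one_add_div_eq_choose {K : Type*} [Field K] [CharZero K] (a m : ℕ) :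
    ∏ k ∈ Icc 1 m, (1 + (a : K) / k) = (a + m).choose m := by
  induction m with
  | zero => simp
  | succ m ih =>
    rw [prod_Icc_succ_top (by omega), ih, ← add_assoc]
    have h := congrArg (Nat.cast : ℕ → K) (Nat.add_one_mul_choose_eq (a + m) m)
    push_cast at h ⊢
    field_simp
    linear_combination h

theorem Nat.choose_two_mul_succ_succ (N : ℕ) :
    (2 * (N + 1)).choose (N + 1) = 2 * (2 * N + 1).choose N := by
  rw [show 2 * (N + 1) = 2 * N + 1 + 1 by ring, choose_succ_succ', choose_symm_half]
  ring

/-- For every prime `p`, `C(2p, p) = 2 · ∑_{n=0}^{p-1} p^n · H_{p-1}(1^n)` in `ℚ`. -/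
theorem centralBinom_eq_mhs_series (p : ℕ) (hp : p.Prime) :
    (Nat.choose (2 * p) p : ℚ) =
      2 * ∑ n ∈ Finset.range p, (p : ℚ) ^ n * mhs (p - 1) (List.replicate n 1) := by
  obtain ⟨N, rfl⟩ : ∃ N, p = N + 1 := ⟨p - 1, by have := hp.pos; omega⟩
  rw [Nat.add_sub_cancel, sum_pow_mul_mhs_replicate_one _ N.lt_succ_self,
    prod_one_add_div_eq_choose, Nat.choose_two_mul_succ_succ,
    show N + 1 + N = 2 * N + 1 by ring]
  norm_cast
end

section
/- For all sufficiently large primes p, the rational number S_p − 2 − p^4·H_{p−1}(4) + 4·p^5·H_{p−1}(4,1) is either zero or has p-adic valuation at least 6 (i.e. S_p ≡ 2 + p^4·H_{p−1}(4) − 4·p^5·H_{p−1}(4,1) mod p^6), where S_p := Σ_{k=0}^{p} C(p, k)^4. -/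
/-!
For `0 < k < p` we have `C(p, k) = (p / k) · C(p - 1, k - 1)`, and
`(-1)^m C(p - 1, m) = ∏_{j ≤ m} (1 - p / j) ≡ 1 - p H_m (mod p²)` because every `j ≤ m < p` is a
`p`-adic unit. In the ultrametric ring `ℚ_p`, congruences modulo `p²` between integral elements
survive fourth powers, and `(1 - pH)⁴ ≡ 1 - 4pH (mod p²)`, so
`C(p, k)⁴ ≡ (p / k)⁴ (1 - 4 p H_{k-1}) (mod p⁶)`. Summing over `0 < k < p` gives
`S_p - 2 ≡ p⁴ H_{p-1}(4) - 4 p⁵ H_{p-1}(4, 1)`, since `H_{p-1}(4, 1) = ∑ k⁻⁴ H_{k-1}`.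
-/

open Finset

section Ultrametric

variable {R : Type*} [NormedCommRing R] [NormOneClass R] [IsUltrametricDist R]

theorem norm_one_sub_le_one {x : R} (hx : ‖x‖ ≤ 1) : ‖1 - x‖ ≤ 1 := by
  have h := IsUltrametricDist.norm_add_one_le_max_norm_one (-x)
  rw [neg_add_eq_sub, norm_neg] at h
  exact h.trans (max_le hx le_rfl)

theorem norm_pow_sub_pow_le {a b : R} (ha : ‖a‖ ≤ 1) (hb : ‖b‖ ≤ 1) (n : ℕ) :
    ‖a ^ n - b ^ n‖ ≤ ‖a - b‖ := by
  rw [← geom_sum₂_mul]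
  refine (norm_mul_le _ _).trans (mul_le_of_le_one_left (norm_nonneg _) ?_)
  refine IsUltrametricDist.norm_sum_le_of_forall_le_of_nonneg zero_le_one fun i _ => ?_
  refine (norm_mul_le _ _).trans (mul_le_one₀ ?_ (norm_nonneg _) ?_)
  · exact (norm_pow_le a i).trans (pow_le_one₀ (norm_nonneg a) ha)
  · exact (norm_pow_le b _).trans (pow_le_one₀ (norm_nonneg b) hb)

theorem norm_one_sub_pow_sub_le {x : R} (hx : ‖x‖ ≤ 1) (n : ℕ) :
    ‖(1 - x) ^ n - (1 - n * x)‖ ≤ ‖x‖ ^ 2 := by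
  induction n with
  | zero => simp
  | succ n ih =>
    have hsplit : (1 - x) ^ (n + 1) - (1 - (n + 1 : ℕ) * x)
        = (1 - x) * ((1 - x) ^ n - (1 - n * x)) + n * x ^ 2 := by
      push_cast; ring
    rw [hsplit]
    refine (IsUltrametricDist.norm_add_le_max _ _).trans (max_le ?_ ?_)
    · exact (norm_mul_le _ _).trans
        ((mul_le_of_le_one_left (norm_nonneg _) (norm_one_sub_le_one hx)).trans ih)
    · exact (norm_mul_le _ _).trans ((mul_le_of_le_one_left (norm_nonneg _)
        (IsUltrametricDist.norm_natCast_le_one R n)).trans (norm_pow_le x 2))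

end Ultrametric

theorem neg_one_pow_mul_choose_succ {K : Type*} [Field K] [CharZero K] {n m : ℕ} (hm : m < n) :
    (-1) ^ (m + 1) * ((n - 1).choose (m + 1) : K)
      = (-1) ^ m * ((n - 1).choose m : K) * (1 - n / (m + 1)) := by
  have hrec := Nat.choose_succ_right_eq (n - 1) m
  have hsub : ((n - 1 - m : ℕ) : K) = n - (m + 1) := by
    rw [Nat.cast_sub (by omega), Nat.cast_sub (by omega)]; push_cast; ring
  have hrecK : ((n - 1).choose (m + 1) : K) * (m + 1) = (n - 1).choose m * (n - (m + 1)) := by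
    rw [← hsub]; exact_mod_cast hrec
  field_simp
  linear_combination -(-1) ^ m * hrecK

theorem Finset.sum_Icc_one_eq_sum_range {M : Type*} [AddCommMonoid M] (f : ℕ → M) (N : ℕ) :
    ∑ n ∈ Icc 1 N, f n = ∑ m ∈ range N, f (m + 1) := by
  rw [range_eq_Ico, sum_Ico_add' f 0 N 1, zero_add, Ico_add_one_right_eq_Icc]

theorem mhs_singleton (N s : ℕ) : mhs N [s] = ∑ m ∈ range N, 1 / ((m : ℚ) + 1) ^ s := by
  simp [mhs, sum_Icc_one_eq_sum_range]

theorem mhs_pair_one (N s : ℕ) :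
    mhs N [s, 1] = ∑ m ∈ range N, 1 / ((m : ℚ) + 1) ^ s * harmonic m := by
  simp [mhs, sum_Icc_one_eq_sum_range, harmonic]

theorem sum_range_choose_pow_eq_two_add {p : ℕ} (hp : 0 < p) (r : ℕ) :
    ∑ k ∈ range (p + 1), (p.choose k : ℚ) ^ r
      = 2 + ∑ m ∈ range (p - 1), (p.choose (m + 1) : ℚ) ^ r := by
  obtain ⟨n, rfl⟩ : ∃ n, p = n + 1 := ⟨p - 1, by omega⟩
  rw [sum_range_succ', sum_range_succ]
  simp only [Nat.choose_self, Nat.cast_one, one_pow, Nat.choose_zero_right, add_tsub_cancel_right]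
  ring

theorem sum_choose_pow_four_sub_eq_sum {p : ℕ} (hp : 0 < p) :
    (∑ k ∈ range (p + 1), (p.choose k : ℚ) ^ 4) - 2 - (p : ℚ) ^ 4 * mhs (p - 1) [4]
        + 4 * (p : ℚ) ^ 5 * mhs (p - 1) [4, 1]
      = ∑ m ∈ range (p - 1),
          ((p.choose (m + 1) : ℚ) ^ 4 - (p / (m + 1)) ^ 4 * (1 - 4 * p * harmonic m)) := by
  rw [sum_range_choose_pow_eq_two_add hp, mhs_singleton, mhs_pair_one, mul_sum, mul_sum,
    add_sub_cancel_left, ← sum_sub_distrib, ← sum_add_distrib]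
  refine sum_congr rfl fun m _ => ?_
  rw [div_pow]; ring

section Padic

variable {p : ℕ} [Fact p.Prime]

theorem norm_natCast_eq_one_of_pos_of_lt {k : ℕ} (hk : 0 < k) (hkp : k < p) :
    ‖(k : ℚ_[p])‖ = 1 :=
  Padic.norm_natCast_eq_one_iff.2 (Nat.coprime_of_lt_prime hk.ne' hkp Fact.out)

theorem norm_harmonic_le_one {m : ℕ} (hm : m < p) : ‖(harmonic m : ℚ_[p])‖ ≤ 1 := by
  rw [harmonic, Rat.cast_sum]
  refine IsUltrametricDist.norm_sum_le_of_forall_le_of_nonneg zero_le_one fun i hi => ?_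
  rw [Rat.cast_inv, Rat.cast_natCast, norm_inv,
    norm_natCast_eq_one_of_pos_of_lt i.succ_pos (by rw [mem_range] at hi; omega), inv_one]

theorem norm_neg_one_pow_mul_choose_sub_le {m : ℕ} (hm : m < p) :
    ‖(-1) ^ m * ((p - 1).choose m : ℚ_[p]) - (1 - p * harmonic m)‖ ≤ ‖(p : ℚ_[p])‖ ^ 2 := by
  induction m with
  | zero => simp
  | succ m ih =>
    set e := (-1) ^ m * ((p - 1).choose m : ℚ_[p]) - (1 - p * harmonic m)
    have hunit : ‖(m : ℚ_[p]) + 1‖ = 1 := by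
      exact_mod_cast norm_natCast_eq_one_of_pos_of_lt m.succ_pos hm
    have hm0 : (m : ℚ_[p]) + 1 ≠ 0 := by
      rw [← norm_ne_zero_iff, hunit]; exact one_ne_zero
    have hstep : (-1) ^ (m + 1) * ((p - 1).choose (m + 1) : ℚ_[p]) - (1 - p * harmonic (m + 1))
        = e * (1 - p / (m + 1)) + p ^ 2 * harmonic m / (m + 1) := by
      rw [neg_one_pow_mul_choose_succ (Nat.lt_of_succ_lt hm), harmonic_succ]
      push_cast
      field_simp
      ring
    rw [hstep]
    refine (IsUltrametricDist.norm_add_le_max _ _).trans (max_le ?_ ?_)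
    · have hfactor : ‖1 - (p : ℚ_[p]) / (m + 1)‖ ≤ 1 := by
        refine norm_one_sub_le_one ?_
        rw [norm_div, hunit, div_one]
        exact IsUltrametricDist.norm_natCast_le_one ℚ_[p] p
      exact (norm_mul_le _ _).trans
        ((mul_le_of_le_one_right (norm_nonneg _) hfactor).trans (ih (Nat.lt_of_succ_lt hm)))
    · rw [norm_div, norm_mul, norm_pow, hunit, div_one]
      exact mul_le_of_le_one_right (by positivity) (norm_harmonic_le_one (Nat.lt_of_succ_lt hm))

theorem norm_choose_succ_pow_four_sub_le {m : ℕ} (hm : m + 1 < p) :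
    ‖(p.choose (m + 1) : ℚ_[p]) ^ 4 - (p / (m + 1)) ^ 4 * (1 - 4 * p * harmonic m)‖
      ≤ ‖(p : ℚ_[p])‖ ^ 6 := by
  set c := (-1) ^ m * ((p - 1).choose m : ℚ_[p])
  set y := (p : ℚ_[p]) * harmonic m
  have hunit : ‖(m : ℚ_[p]) + 1‖ = 1 := by
    exact_mod_cast norm_natCast_eq_one_of_pos_of_lt m.succ_pos hm
  have hm0 : (m : ℚ_[p]) + 1 ≠ 0 := by
    rw [← norm_ne_zero_iff, hunit]; exact one_ne_zero
  have hchoose : (p.choose (m + 1) : ℚ_[p]) = p / (m + 1) * ((p - 1).choose m) := by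
    have h := Nat.add_one_mul_choose_eq (p - 1) m
    rw [Nat.sub_add_cancel (Fact.out : p.Prime).one_le] at h
    field_simp
    exact_mod_cast h.symm
  have hc_pow : (p.choose (m + 1) : ℚ_[p]) ^ 4 = (p / (m + 1)) ^ 4 * c ^ 4 := by
    rw [hchoose, mul_pow, mul_pow, ← pow_mul, mul_comm m, pow_mul]
    norm_num
  have hy : ‖y‖ ≤ ‖(p : ℚ_[p])‖ :=
    (norm_mul_le _ _).trans (mul_le_of_le_one_right (norm_nonneg _)
      (norm_harmonic_le_one (Nat.lt_of_succ_lt hm)))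
  have hy1 : ‖y‖ ≤ 1 := hy.trans (IsUltrametricDist.norm_natCast_le_one ℚ_[p] p)
  have hc : ‖c‖ ≤ 1 := by
    rw [norm_mul, norm_pow, norm_neg, norm_one, one_pow, one_mul]
    exact IsUltrametricDist.norm_natCast_le_one ℚ_[p] _
  have hc4 : ‖c ^ 4 - (1 - y) ^ 4‖ ≤ ‖(p : ℚ_[p])‖ ^ 2 :=
    (norm_pow_sub_pow_le hc (norm_one_sub_le_one hy1) 4).trans
      (norm_neg_one_pow_mul_choose_sub_le (Nat.lt_of_succ_lt hm))
  have hy4 : ‖(1 - y) ^ 4 - (1 - 4 * y)‖ ≤ ‖(p : ℚ_[p])‖ ^ 2 := by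
    simpa using (norm_one_sub_pow_sub_le hy1 4).trans (pow_le_pow_left₀ (norm_nonneg _) hy 2)
  calc _ = ‖(p / (m + 1)) ^ 4 * ((c ^ 4 - (1 - y) ^ 4) + ((1 - y) ^ 4 - (1 - 4 * y)))‖ := by
        rw [hc_pow]; congr 1; ring
    _ ≤ ‖(p : ℚ_[p])‖ ^ 4 * ‖(p : ℚ_[p])‖ ^ 2 := by
        rw [norm_mul, norm_pow, norm_div, hunit, div_one]
        gcongr
        exact (IsUltrametricDist.norm_add_le_max _ _).trans (max_le hc4 hy4)
    _ = ‖(p : ℚ_[p])‖ ^ 6 := by ring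

theorem le_padicValRat_of_norm_le {q : ℚ} (hq : q ≠ 0) {n : ℕ}
    (h : ‖(q : ℚ_[p])‖ ≤ ‖(p : ℚ_[p])‖ ^ n) : (n : ℤ) ≤ padicValRat p q := by
  rw [Padic.norm_eq_zpow_neg_valuation (by exact_mod_cast hq), Padic.valuation_ratCast,
    Padic.norm_p, inv_pow, ← zpow_natCast, ← zpow_neg] at h
  have hp1 : (1 : ℝ) < p := by exact_mod_cast (Fact.out : p.Prime).one_lt
  exact neg_le_neg_iff.1 ((zpow_le_zpow_iff_right₀ hp1).1 h)

end Padic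

/-- For all sufficiently large primes `p`,
`∑_{k=0}^{p} C(p,k)^4 ≡ 2 + p^4·H_{p−1}(4) − 4·p^5·H_{p−1}(4,1) (mod p^6)`. -/
theorem sum_choose_pow_four_supercongruence :
    ∃ N : ℕ, ∀ p : ℕ, p.Prime → N ≤ p →
      (∑ k ∈ Finset.range (p + 1), (Nat.choose p k : ℚ) ^ 4)
          - 2 - (p : ℚ) ^ 4 * mhs (p - 1) [4] + 4 * (p : ℚ) ^ 5 * mhs (p - 1) [4, 1] = 0 ∨
      (6 : ℤ) ≤ padicValRat p
        ((∑ k ∈ Finset.range (p + 1), (Nat.choose p k : ℚ) ^ 4)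
          - 2 - (p : ℚ) ^ 4 * mhs (p - 1) [4] + 4 * (p : ℚ) ^ 5 * mhs (p - 1) [4, 1]) := by
  refine ⟨0, fun p hp _ => ?_⟩
  have := Fact.mk hp
  rw [or_iff_not_imp_left, sum_choose_pow_four_sub_eq_sum hp.pos]
  intro hne
  refine le_padicValRat_of_norm_le hne ?_
  rw [Rat.cast_sum]
  refine IsUltrametricDist.norm_sum_le_of_forall_le_of_nonneg (by positivity) fun m hm => ?_
  push_cast
  exact norm_choose_succ_pow_four_sub_le (by rw [mem_range] at hm; omega)
end

section
/- For all integers a ≥ b ≥ 0 and every positive integer p, one has the identity of natural numbers: C(a·p, b·p) · ∏_{n=1}^{b} C(n·p, p) = ∏_{n=a−b+1}^{a} C(n·p, p). -/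
/-! Both sides become factorial quotients: `∏_{n=c+1}^{c+b} C(np, p) = ((c+b)p)! / (p!^b (cp)!)`
by telescoping `C((n+1)p, p) = ((n+1)p)! / (p! (np)!)`, and `C(ap, bp) = (ap)! / ((bp)! ((a-b)p)!)`. -/

open Finset Nat

theorem prod_Icc_choose_mul_mul_pow_factorial (c b p : ℕ) :
    (∏ n ∈ Icc (c + 1) (c + b), (n * p).choose p) * p ! ^ b * (c * p)! = ((c + b) * p)! := by
  induction b with
  | zero => simp
  | succ b ih =>
    rw [← add_assoc, prod_Icc_succ_top (by omega), Nat.add_one_mul (c + b),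
      ← add_choose_mul_factorial_mul_factorial, ← ih]
    ring

theorem choose_mul_prod_choose_general (a b p : ℕ) (hba : b ≤ a) :
    Nat.choose (a * p) (b * p) * ∏ n ∈ Finset.Icc 1 b, Nat.choose (n * p) p =
      ∏ n ∈ Finset.Icc (a - b + 1) a, Nat.choose (n * p) p := by
  obtain ⟨c, rfl⟩ : ∃ c, a = c + b := ⟨a - b, by omega⟩
  rw [Nat.add_sub_cancel]
  apply Nat.eq_of_mul_eq_mul_right (by positivity : 0 < p ! ^ b * (c * p)!)
  have h₀ := prod_Icc_choose_mul_mul_pow_factorial 0 b p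
  rw [zero_add, zero_add, zero_mul, factorial_zero, mul_one] at h₀
  calc ((c + b) * p).choose (b * p) * (∏ n ∈ Icc 1 b, (n * p).choose p) * (p ! ^ b * (c * p)!)
      = (c * p + b * p).choose (b * p) * (c * p)! *
          ((∏ n ∈ Icc 1 b, (n * p).choose p) * p ! ^ b) := by rw [add_mul]; ring
    _ = ((c + b) * p)! := by rw [h₀, add_choose_mul_factorial_mul_factorial, add_mul]
    _ = (∏ n ∈ Icc (c + 1) (c + b), (n * p).choose p) * (p ! ^ b * (c * p)!) := by
      rw [← prod_Icc_choose_mul_mul_pow_factorial, mul_assoc]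

/-- For `a ≥ b ≥ 0` and `p ≥ 1`,
`C(ap, bp) · ∏_{n=1}^{b} C(np, p) = ∏_{n=a−b+1}^{a} C(np, p)` as natural numbers. -/
theorem choose_mul_prod_choose (a b p : ℕ) (hba : b ≤ a) (hp : 1 ≤ p) :
    Nat.choose (a * p) (b * p) * ∏ n ∈ Finset.Icc 1 b, Nat.choose (n * p) p =
      ∏ n ∈ Finset.Icc (a - b + 1) a, Nat.choose (n * p) p :=
  choose_mul_prod_choose_general a b p hba
end

section
/- For all integers k ≥ r ≥ 0 and every prime p, one has the identity in ℚ: C(k·p, r·p) · ∏_{n=0}^{r−1} ( Σ_{i=0}^{p−1} n^i·p^i·H_{p−1}(1^i) ) = C(k, r) · ∏_{n=k−r}^{k−1} ( Σ_{i=0}^{p−1} n^i·p^i·H_{p−1}(1^i) ). -/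
lemma mhs_eq_zero (s : List ℕ) : ∀ N, N < s.length → mhs N s = 0 := by
  induction s with
  | nil => simp
  | cons a t ih =>
    intro N h
    rw [mhs]
    apply Finset.sum_eq_zero
    intro n hn
    simp only [Finset.mem_Icc] at hn
    simp only [List.length_cons] at h
    rw [ih (n-1) (by omega)]
    ring

lemma mhs_succ (N i : ℕ) :
    mhs (N+1) (List.replicate (i+1) 1) =
      mhs N (List.replicate (i+1) 1) + (1/(N+1 : ℚ)) * mhs N (List.replicate i 1) := by
  rw [List.replicate_succ, mhs, mhs, Finset.sum_Icc_succ_top (by omega)]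
  push_cast
  norm_num

lemma key (N : ℕ) (x : ℚ) :
    ∑ i ∈ Finset.range (N+1), x^i * mhs N (List.replicate i 1) =
      ∏ j ∈ Finset.Icc 1 N, (1 + x / j) := by
  induction N with
  | zero => simp [mhs]
  | succ N ih =>
    rw [Finset.prod_Icc_succ_top (by omega), ← ih]
    rw [Finset.sum_range_succ']
    simp only [mhs_succ]
    have h0 : mhs N (List.replicate (N+1) 1) = 0 :=
      mhs_eq_zero _ N (by simp)
    rw [show (∑ i ∈ Finset.range (N+1), x^(i+1) *
        (mhs N (List.replicate (i+1) 1) + (1/(N+1 : ℚ)) * mhs N (List.replicate i 1)))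
        = (∑ i ∈ Finset.range (N+1), x^(i+1) * mhs N (List.replicate (i+1) 1))
          + (x/(N+1:ℚ)) * ∑ i ∈ Finset.range (N+1), x^i * mhs N (List.replicate i 1) by
      rw [Finset.mul_sum, ← Finset.sum_add_distrib]
      apply Finset.sum_congr rfl
      intro i _
      ring]
    rw [Finset.sum_range_succ, h0]
    have e0 : mhs (N+1) (List.replicate 0 1) = 1 := rfl
    have e0' : mhs N (List.replicate 0 1) = 1 := rfl
    rw [e0, Finset.sum_range_succ' (fun i => x ^ i * mhs N (List.replicate i 1)) N]
    simp only [e0']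
    push_cast
    ring

lemma fact_add (a : ℕ) : ∀ b, (a + b).factorial = a.factorial * ∏ j ∈ Finset.Icc 1 b, (a + j) := by
  intro b
  induction b with
  | zero => simp
  | succ b ih =>
    rw [show a + (b+1) = (a+b)+1 by ring, Nat.factorial_succ, ih,
      Finset.prod_Icc_succ_top (by omega : 1 ≤ b+1)]
    ring

lemma fact_step (p m : ℕ) (hp : 1 ≤ p) :
    ((m+1)*p).factorial =
      (m*p).factorial * (∏ j ∈ Finset.Icc 1 (p-1), (m*p+j)) * ((m+1)*p) := by
  obtain ⟨q, rfl⟩ : ∃ q, p = q + 1 := ⟨p-1, by omega⟩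
  rw [show (m+1)*(q+1) = m*(q+1) + (q+1) by ring, fact_add,
    Finset.prod_Icc_succ_top (by omega : 1 ≤ q+1)]
  simp only [Nat.add_sub_cancel]
  ring

lemma factB (p : ℕ) (hp : 1 ≤ p) (m : ℕ) : ∀ d,
    ((m+d)*p).factorial * m.factorial =
      (m*p).factorial * (m+d).factorial * p^d *
        ∏ n ∈ Finset.Ico m (m+d), ∏ j ∈ Finset.Icc 1 (p-1), (n*p+j) := by
  intro d
  induction d with
  | zero => simp
  | succ d ih =>
    rw [show m+(d+1) = (m+d)+1 by ring, fact_step p (m+d) hp,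
      Finset.prod_Ico_succ_top (by omega : m ≤ m+d), Nat.factorial_succ]
    calc (((m+d)*p).factorial * (∏ j ∈ Finset.Icc 1 (p-1), ((m+d)*p+j)) * ((m+d+1)*p)) * m.factorial
        = ((m+d)*p).factorial * m.factorial * (∏ j ∈ Finset.Icc 1 (p-1), ((m+d)*p+j)) * ((m+d+1)*p) := by ring
      _ = (m*p).factorial * (m+d).factorial * p^d *
            (∏ n ∈ Finset.Ico m (m+d), ∏ j ∈ Finset.Icc 1 (p-1), (n*p+j)) *
            (∏ j ∈ Finset.Icc 1 (p-1), ((m+d)*p+j)) * ((m+d+1)*p) := by rw [ih]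
      _ = _ := by ring

/-- For `k ≥ r ≥ 0` and a prime `p`,
`C(kp, rp) · ∏_{n=0}^{r−1} (∑_{i=0}^{p−1} n^i p^i H_{p−1}(1^i))
  = C(k, r) · ∏_{n=k−r}^{k−1} (∑_{i=0}^{p−1} n^i p^i H_{p−1}(1^i))` in `ℚ`. -/
theorem choose_kp_rp_mul_prod_eq (k r p : ℕ) (hrk : r ≤ k) (hp : p.Prime) :
    (Nat.choose (k * p) (r * p) : ℚ) *
        ∏ n ∈ Finset.range r,
          (∑ i ∈ Finset.range p, (n : ℚ) ^ i * (p : ℚ) ^ i * mhs (p - 1) (List.replicate i 1)) =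
      (Nat.choose k r : ℚ) *
        ∏ n ∈ Finset.Ico (k - r) k,
          (∑ i ∈ Finset.range p, (n : ℚ) ^ i * (p : ℚ) ^ i * mhs (p - 1) (List.replicate i 1)) := by
  have hp1 : 1 ≤ p := hp.one_le
  set f : ℚ := ((p-1).factorial : ℚ) with hfdef
  have hfne : f ≠ 0 := by
    simp [hfdef, Nat.factorial_ne_zero]
  -- each factor equals a ratio of naturals
  have hfac : ∀ n : ℕ,
      (∑ i ∈ Finset.range p, (n : ℚ) ^ i * (p : ℚ) ^ i * mhs (p - 1) (List.replicate i 1))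
        = ((∏ j ∈ Finset.Icc 1 (p-1), (n*p+j) : ℕ) : ℚ) / f := by
    intro n
    have hk := key (p-1) ((n : ℚ) * p)
    rw [show (p-1)+1 = p by omega] at hk
    have hfprod : f = ((∏ j ∈ Finset.Icc 1 (p-1), j : ℕ) : ℚ) := by
      have := fact_add 0 (p-1)
      simp only [zero_add, Nat.factorial_zero, one_mul] at this
      rw [hfdef, this]
    calc ∑ i ∈ Finset.range p, (n:ℚ)^i * (p:ℚ)^i * mhs (p-1) (List.replicate i 1)
        = ∑ i ∈ Finset.range p, ((n:ℚ)*(p:ℚ))^i * mhs (p-1) (List.replicate i 1) := by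
          refine Finset.sum_congr rfl fun i _ => ?_
          rw [mul_pow]
      _ = ∏ j ∈ Finset.Icc 1 (p-1), (1 + (n:ℚ)*(p:ℚ) / (j:ℚ)) := hk
      _ = ∏ j ∈ Finset.Icc 1 (p-1), (((n*p+j : ℕ):ℚ) / (j:ℚ)) := by
          refine Finset.prod_congr rfl fun j hj => ?_
          simp only [Finset.mem_Icc] at hj
          have hj0 : (j:ℚ) ≠ 0 := by
            have : 0 < j := by omega
            positivity
          push_cast
          field_simp
          ring
      _ = ((∏ j ∈ Finset.Icc 1 (p-1), (n*p+j) : ℕ) : ℚ) / f := by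
          rw [Finset.prod_div_distrib, hfprod]
          push_cast
          ring
  simp only [hfac]
  rw [Finset.prod_div_distrib, Finset.prod_div_distrib, Finset.prod_const, Finset.prod_const,
    Finset.card_range, Nat.card_Ico, show k - (k-r) = r by omega]
  -- key factorial identities
  have hA : ((r*p).factorial : ℚ) =
      (r.factorial : ℚ) * (p:ℚ)^r * ((∏ n ∈ Finset.range r, ∏ j ∈ Finset.Icc 1 (p-1), (n*p+j) : ℕ) : ℚ) := by
    have := factB p hp1 0 r
    simp only [zero_add, Nat.zero_mul, Nat.factorial_zero, one_mul, mul_one] at this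
    rw [Finset.range_eq_Ico]
    exact_mod_cast congrArg (Nat.cast : ℕ → ℚ) this
  have hB : ((k*p).factorial : ℚ) * ((k-r).factorial : ℚ) =
      (((k-r)*p).factorial : ℚ) * (k.factorial : ℚ) * (p:ℚ)^r *
        ((∏ n ∈ Finset.Ico (k-r) k, ∏ j ∈ Finset.Icc 1 (p-1), (n*p+j) : ℕ) : ℚ) := by
    have := factB p hp1 (k-r) r
    rw [show k - r + r = k by omega] at this
    exact_mod_cast congrArg (Nat.cast : ℕ → ℚ) this
  have hc1 : ((k*p).choose (r*p) : ℚ) =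
      ((k*p).factorial : ℚ) / (((r*p).factorial : ℚ) * (((k-r)*p).factorial : ℚ)) := by
    rw [Nat.cast_choose ℚ (Nat.mul_le_mul_right p hrk), Nat.sub_mul]
  have hc2 : (k.choose r : ℚ) = (k.factorial : ℚ) / ((r.factorial : ℚ) * ((k-r).factorial : ℚ)) := by
    rw [Nat.cast_choose ℚ hrk]
  rw [← Nat.cast_prod, ← Nat.cast_prod]
  set AA : ℚ := ((∏ n ∈ Finset.range r, ∏ j ∈ Finset.Icc 1 (p-1), (n*p+j) : ℕ) : ℚ) with hAAdef
  set BB : ℚ := ((∏ n ∈ Finset.Ico (k-r) k, ∏ j ∈ Finset.Icc 1 (p-1), (n*p+j) : ℕ) : ℚ) with hBBdef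
  rw [hc1, hc2]
  have h1 : ((r*p).factorial : ℚ) ≠ 0 := by exact_mod_cast Nat.factorial_ne_zero _
  have h2 : (((k-r)*p).factorial : ℚ) ≠ 0 := by exact_mod_cast Nat.factorial_ne_zero _
  have h3 : (r.factorial : ℚ) ≠ 0 := by exact_mod_cast Nat.factorial_ne_zero _
  have h4 : ((k-r).factorial : ℚ) ≠ 0 := by exact_mod_cast Nat.factorial_ne_zero _
  have h5 : (k.factorial : ℚ) ≠ 0 := by exact_mod_cast Nat.factorial_ne_zero _
  have h6 : (p:ℚ) ≠ 0 := by exact_mod_cast hp.ne_zero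
  have h6' : (p:ℚ)^r ≠ 0 := pow_ne_zero _ h6
  have hAA : AA = ((r*p).factorial:ℚ) / ((r.factorial:ℚ) * (p:ℚ)^r) := by
    rw [eq_div_iff (mul_ne_zero h3 h6'), hA]; ring
  have hBB : BB = ((k*p).factorial:ℚ) * ((k-r).factorial:ℚ) /
      ((((k-r)*p).factorial:ℚ) * (k.factorial:ℚ) * (p:ℚ)^r) := by
    rw [eq_div_iff (mul_ne_zero (mul_ne_zero h2 h5) h6'), hB]; ring
  rw [hAA, hBB]
  field_simp
end
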